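/- arXiv:1506.08170 — 5 statements merged into one kernel-verified Lean document; each statement's English description precedes it below -/
import Mathlib

section
/- For any canonical pair (φᵢ, ψᵢ) with canonical correlation λᵢ > 0, the quadruple (φᵢ, ψᵢ, λᵢφᵢ, λᵢψᵢ) is a fixed point of the AppGrad iteration: that is, if φ̃ = λᵢφᵢ and ψ = ψᵢ, then φ̃ − η₁ Sₓ(φ̃) + η₁ S_{xy} ψ = φ̃ for any step size η₁ > 0, and the normalization φ̃ / ‖φ̃‖_x = φᵢ, and symmetrically for the y-side. -/
/-!
With `eᵢ` the `i`-th unit vector, `ψᵢ = Ψ eᵢ` and the decomposition give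
`S_{xy} ψᵢ = Sₓ Φ diag(λ) (Ψᵀ S_y Ψ) eᵢ = λᵢ Sₓ φᵢ`, so the gradient at `(λᵢ φᵢ, ψᵢ)` vanishes;
and `φᵢᵀ Sₓ φᵢ = (Φᵀ Sₓ Φ)ᵢᵢ = 1`, so normalizing `λᵢ φᵢ` returns `φᵢ`. The y-side is the same
argument applied to the transposed decomposition `S_{yx} = S_y Ψ diag(λ) Φᵀ Sₓ`.
-/

open Matrix

theorem mulVec_col_of_mul_diagonal_mul {R m n k o : Type*} [CommSemiring R] [Fintype n]
    [Fintype k] [Fintype o] [DecidableEq k] (A : Matrix m n R) (Φ : Matrix n k R) (d : k → R)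
    (Ψ : Matrix o k R) (B : Matrix o o R) (hΨ : Ψᵀ * B * Ψ = 1) (i : k) :
    (A * Φ * diagonal d * Ψᵀ * B) *ᵥ Ψ.col i = d i • (A *ᵥ Φ.col i) := by
  have hcancel : A * Φ * diagonal d * Ψᵀ * B * Ψ = A * Φ * diagonal d := by
    simp only [Matrix.mul_assoc] at hΨ ⊢
    rw [hΨ, Matrix.mul_one]
  rw [← mulVec_single_one, ← mulVec_single_one, mulVec_mulVec, hcancel, ← mulVec_mulVec,
    diagonal_mulVec_single, ← smul_eq_mul, Pi.single_smul', mulVec_smul, ← mulVec_mulVec]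

theorem col_dotProduct_mulVec_col {R n o : Type*} [CommSemiring R] [Fintype o]
    (B : Matrix o o R) (Ψ : Matrix o n R) (i j : n) :
    Ψ.col i ⬝ᵥ (B *ᵥ Ψ.col j) = (Ψᵀ * B * Ψ) i j := by
  rw [dotProduct_mulVec, mul_apply']
  rfl

theorem appGrad_gradientStep_fixed {R m n : Type*} [CommRing R] [Fintype m] [Fintype n]
    (S : Matrix m m R) (C : Matrix m n R) (c η : R) (φ : m → R) (ψ : n → R)
    (h : C *ᵥ ψ = c • (S *ᵥ φ)) :
    c • φ - η • (S *ᵥ (c • φ)) + η • (C *ᵥ ψ) = c • φ := by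
  rw [h, mulVec_smul]
  abel

theorem appGrad_normalize_fixed {m : Type*} [Fintype m] (S : Matrix m m ℝ) {c : ℝ} (hc : 0 < c)
    (v : m → ℝ) (hv : v ⬝ᵥ (S *ᵥ v) = 1) :
    (Real.sqrt ((c • v) ⬝ᵥ (S *ᵥ (c • v))))⁻¹ • (c • v) = v := by
  rw [mulVec_smul, smul_dotProduct, dotProduct_smul, hv, smul_eq_mul, smul_eq_mul, mul_one,
    Real.sqrt_mul_self hc.le, smul_smul, inv_mul_cancel₀ hc.ne', one_smul]

theorem stmt3_general {p1 p2 p : ℕ}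
    (Sx : Matrix (Fin p1) (Fin p1) ℝ) (Sy : Matrix (Fin p2) (Fin p2) ℝ)
    (Sxy : Matrix (Fin p1) (Fin p2) ℝ)
    (hSxpd : Sx.PosDef) (hSypd : Sy.PosDef)
    (Φ : Matrix (Fin p1) (Fin p) ℝ) (Ψ : Matrix (Fin p2) (Fin p) ℝ)
    (l : Fin p → ℝ)
    (hΦ : Φᵀ * Sx * Φ = 1) (hΨ : Ψᵀ * Sy * Ψ = 1)
    (hdecomp : Sxy = Sx * Φ * Matrix.diagonal l * Ψᵀ * Sy)
    (i : Fin p) (hli : 0 < l i)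
    (φi : Fin p1 → ℝ) (ψi : Fin p2 → ℝ)
    (hφi : φi = fun j => Φ j i) (hψi : ψi = fun j => Ψ j i)
    (η1 η2 : ℝ) :
    -- x-side gradient step is a fixed point
    (l i • φi) - η1 • (Sx *ᵥ (l i • φi)) + η1 • (Sxy *ᵥ ψi) = l i • φi ∧
    -- x-side normalization recovers `φᵢ`
    (Real.sqrt ((l i • φi) ⬝ᵥ (Sx *ᵥ (l i • φi))))⁻¹ • (l i • φi) = φi ∧
    -- y-side gradient step is a fixed point
    (l i • ψi) - η2 • (Sy *ᵥ (l i • ψi)) + η2 • (Sxyᵀ *ᵥ φi) = l i • ψi ∧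
    -- y-side normalization recovers `ψᵢ`
    (Real.sqrt ((l i • ψi) ⬝ᵥ (Sy *ᵥ (l i • ψi))))⁻¹ • (l i • ψi) = ψi := by
  obtain rfl : φi = Φ.col i := hφi
  obtain rfl : ψi = Ψ.col i := hψi
  have hSx : Sxᵀ = Sx := (isHermitian_iff_isSymm.mp hSxpd.isHermitian).eq
  have hSy : Syᵀ = Sy := (isHermitian_iff_isSymm.mp hSypd.isHermitian).eq
  have hSyx : Sxyᵀ = Sy * Ψ * diagonal l * Φᵀ * Sx := by
    simp only [hdecomp, transpose_mul, transpose_transpose, diagonal_transpose, hSx, hSy,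
      Matrix.mul_assoc]
  refine ⟨appGrad_gradientStep_fixed _ _ _ _ _ _ ?_, appGrad_normalize_fixed _ hli _ ?_,
    appGrad_gradientStep_fixed _ _ _ _ _ _ ?_, appGrad_normalize_fixed _ hli _ ?_⟩
  · rw [hdecomp, mulVec_col_of_mul_diagonal_mul _ _ _ _ _ hΨ]
  · rw [col_dotProduct_mulVec_col, hΦ, one_apply_eq]
  · rw [hSyx, mulVec_col_of_mul_diagonal_mul _ _ _ _ _ hΦ]
  · rw [col_dotProduct_mulVec_col, hΨ, one_apply_eq]

/-- each canonical quadruple `(φᵢ, ψᵢ, λᵢφᵢ, λᵢψᵢ)` is a fixed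
point of the AppGrad iteration (gradient step and normalization step on both
the x- and y-sides). -/
theorem stmt3 {p1 p2 p : ℕ}
    (Sx : Matrix (Fin p1) (Fin p1) ℝ) (Sy : Matrix (Fin p2) (Fin p2) ℝ)
    (Sxy : Matrix (Fin p1) (Fin p2) ℝ)
    (hSxpd : Sx.PosDef) (hSypd : Sy.PosDef)
    (Φ : Matrix (Fin p1) (Fin p) ℝ) (Ψ : Matrix (Fin p2) (Fin p) ℝ)
    (l : Fin p → ℝ)
    (hΦ : Φᵀ * Sx * Φ = 1) (hΨ : Ψᵀ * Sy * Ψ = 1)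
    (hdecomp : Sxy = Sx * Φ * Matrix.diagonal l * Ψᵀ * Sy)
    (i : Fin p) (hli : 0 < l i)
    (φi : Fin p1 → ℝ) (ψi : Fin p2 → ℝ)
    (hφi : φi = fun j => Φ j i) (hψi : ψi = fun j => Ψ j i)
    (η1 η2 : ℝ) (hη1 : 0 < η1) (hη2 : 0 < η2) :
    -- x-side gradient step is a fixed point
    (l i • φi) - η1 • (Sx *ᵥ (l i • φi)) + η1 • (Sxy *ᵥ ψi) = l i • φi ∧
    -- x-side normalization recovers `φᵢ`
    (Real.sqrt ((l i • φi) ⬝ᵥ (Sx *ᵥ (l i • φi))))⁻¹ • (l i • φi) = φi ∧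
    -- y-side gradient step is a fixed point
    (l i • ψi) - η2 • (Sy *ᵥ (l i • ψi)) + η2 • (Sxyᵀ *ᵥ φi) = l i • ψi ∧
    -- y-side normalization recovers `ψᵢ`
    (Real.sqrt ((l i • ψi) ⬝ᵥ (Sy *ᵥ (l i • ψi))))⁻¹ • (l i • ψi) = ψi :=
  stmt3_general Sx Sy Sxy hSxpd hSypd Φ Ψ l hΦ hΨ hdecomp i hli φi ψi hφi hψi η1 η2
end

section
/- Suppose the leading canonical correlation λ₁ ≠ 1 and φ₁ is not an eigenvector of Sₓ. Then for all step sizes η₁ > 0, the pair (φ₁, ψ₁) is not a fixed point of the naive projected gradient scheme: the update φ⁺ = v/‖v‖_x with v = φ₁ − η₁(Sₓφ₁ − S_{xy}ψ₁) satisfies φ⁺ ≠ φ₁. -/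
open Matrix

/-- if `λ₁ ≠ 1` and `φ₁` is not an eigenvector of `Sx`, then for
every step size `η₁ > 0` the leading canonical pair is not a fixed point of
the naive projected gradient scheme. -/
theorem stmt4 {p1 p2 : ℕ}
    (Sx : Matrix (Fin p1) (Fin p1) ℝ) (Sy : Matrix (Fin p2) (Fin p2) ℝ)
    (Sxy : Matrix (Fin p1) (Fin p2) ℝ)
    (hSxpd : Sx.PosDef) (hSypd : Sy.PosDef)
    (φ1 : Fin p1 → ℝ) (ψ1 : Fin p2 → ℝ) (lam1 : ℝ)
    (hnorm : φ1 ⬝ᵥ (Sx *ᵥ φ1) = 1)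
    (hpair : Sxy *ᵥ ψ1 = lam1 • (Sx *ᵥ φ1))
    (hlam : lam1 ≠ 1)
    (heig : ¬ ∃ μ : ℝ, Sx *ᵥ φ1 = μ • φ1) :
    ∀ η1 : ℝ, 0 < η1 →
      ∀ v : Fin p1 → ℝ, v = φ1 - η1 • (Sx *ᵥ φ1 - Sxy *ᵥ ψ1) →
        (Real.sqrt (v ⬝ᵥ (Sx *ᵥ v)))⁻¹ • v ≠ φ1 := by
  intro η1 hη v hv h
  set s := Real.sqrt (v ⬝ᵥ (Sx *ᵥ v)) with hs
  by_cases hs0 : s = 0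
  · rw [hs0, _root_.inv_zero, zero_smul] at h
    rw [← h] at hnorm
    simp at hnorm
  · have hvs : v = s • φ1 := by
      rw [← h, smul_smul, mul_inv_cancel₀ hs0, one_smul]
    have hc : η1 * (1 - lam1) ≠ 0 :=
      mul_ne_zero hη.ne' (sub_ne_zero.mpr (Ne.symm hlam))
    apply heig
    refine ⟨(1 - s) / (η1 * (1 - lam1)), ?_⟩
    have key : (η1 * (1 - lam1)) • (Sx *ᵥ φ1) = (1 - s) • φ1 := by
      have hv2 : v = φ1 - (η1 * (1 - lam1)) • (Sx *ᵥ φ1) := by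
        rw [hv, hpair]
        module
      rw [hvs] at hv2
      rw [sub_smul, one_smul, hv2]
      module
    have := congrArg (fun w => (η1 * (1 - lam1))⁻¹ • w) key
    simp only [smul_smul, inv_mul_cancel₀ hc, one_smul] at this
    rw [this, div_eq_inv_mul, mul_comm]
end

section
/- Let Λ_k = diag(λ₁,…,λ_k) with all λᵢ > 0, Φ_k and Ψ_k the matrices of top k canonical vectors, and Q any k×k orthogonal matrix. Then (Φ_kQ, Ψ_kQ, Φ_kΛ_kQ, Ψ_kΛ_kQ) is a fixed point of the rank-k AppGrad iteration: the gradient step Φ̃⁺ = Φ_kΛ_kQ − η₁(Sₓ·Φ_kΛ_kQ − S_{xy}·Ψ_kQ) equals Φ_kΛ_kQ, the Gram matrix (Φ̃⁺)ᵀSₓΦ̃⁺ equals QᵀΛ_k²Q, and the normalized iterate Φ̃⁺ · ((Φ̃⁺)ᵀSₓΦ̃⁺)^{-1/2} equals Φ_kQ; symmetrically for the Ψ side. -/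
/-!
Because `Ψᵀ S_y Ψ = I`, the decomposition gives `S_{xy} Ψ_k = Sₓ Φ_k Λ_k`, so the gradient
`Sₓ Φ_k Λ_k Q - S_{xy} Ψ_k Q` vanishes and the step does not move. As `Φ_kᵀ Sₓ Φ_k = I`, the Gram
matrix is `Qᵀ Λ_k² Q`; its positive definite square root is unique, hence equal to `Qᵀ Λ_k Q`, and
`Φ_k Λ_k Q (Qᵀ Λ_k Q)⁻¹ = Φ_k Q`. The `Ψ` side is the same argument applied to the transposed
decomposition `S_{xy}ᵀ = S_y Ψ Λ Φᵀ Sₓᵀ`.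
-/

open Matrix

namespace Matrix

section Submatrix

variable {R : Type*} [CommSemiring R] {m n ι κ : Type*}

theorem mul_submatrix_id [Fintype n] (A : Matrix m n R) (B : Matrix n ι R) (g : κ → ι) :
    A * B.submatrix id g = (A * B).submatrix id g := rfl

theorem transpose_submatrix_mul_mul_submatrix_eq_one [Fintype m] [DecidableEq ι] [DecidableEq κ]
    {A : Matrix m ι R} {S : Matrix m m R} (hA : Aᵀ * S * A = 1) {g : κ → ι}
    (hg : Function.Injective g) : (A.submatrix id g)ᵀ * S * A.submatrix id g = 1 :=
  calc (A.submatrix id g)ᵀ * S * A.submatrix id g = (Aᵀ * S * A).submatrix g g := rfl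
    _ = 1 := by rw [hA, submatrix_one g hg]

theorem mul_diagonal_submatrix [Fintype κ] [DecidableEq ι] [DecidableEq κ] [Fintype ι]
    (A : Matrix m ι R) (d : ι → R) (g : κ → ι) :
    (A * diagonal d).submatrix id g = A.submatrix id g * diagonal (d ∘ g) := by
  ext; simp [mul_diagonal]

end Submatrix

theorem mul_mul_inv_transpose_mul_mul {K : Type*} [Field K] {m κ : Type*} [Fintype κ]
    [DecidableEq κ] (A : Matrix m κ K) {Λ Q : Matrix κ κ K} (hΛ : IsUnit Λ.det)
    (hQ : Qᵀ * Q = 1) : A * Λ * Q * (Qᵀ * Λ * Q)⁻¹ = A * Q := by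
  have hQinv : Q⁻¹ = Qᵀ := inv_eq_left_inv hQ
  have hQTinv : Qᵀ⁻¹ = Q := inv_eq_left_inv (mul_eq_one_comm.mp hQ)
  rw [mul_inv_rev, mul_inv_rev, hQinv, hQTinv]
  calc A * Λ * Q * (Qᵀ * (Λ⁻¹ * Q)) = A * (Λ * (Q * Qᵀ) * Λ⁻¹) * Q := by
        simp only [Matrix.mul_assoc]
    _ = A * Q := by
        rw [mul_eq_one_comm.mp hQ, Matrix.mul_one, mul_nonsing_inv _ hΛ, Matrix.mul_one]

open scoped ComplexOrder MatrixOrder in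
theorem PosSemidef.eq_of_mul_self_eq {𝕜 κ : Type*} [RCLike 𝕜] [Fintype κ] [DecidableEq κ]
    {M N : Matrix κ κ 𝕜} (hM : M.PosSemidef) (hN : N.PosSemidef) (h : M * M = N * N) : M = N := by
  rw [← sq, ← sq] at h
  exact (CFC.sq_eq_sq_iff M N hM.nonneg hN.nonneg).mp h

theorem mul_submatrix_id_eq_of_eq_mul_diagonal_mul {R : Type*} [CommRing R]
    {m n ι κ : Type*} [Fintype m] [Fintype n] [Fintype ι] [DecidableEq ι] [Fintype κ]
    [DecidableEq κ] {S : Matrix m m R} {T : Matrix n n R} {C : Matrix m n R}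
    {Φ : Matrix m ι R} {Ψ : Matrix n ι R} {l : ι → R}
    (hC : C = S * Φ * diagonal l * Ψᵀ * T) (hΨ : Ψᵀ * T * Ψ = 1) (g : κ → ι) :
    C * Ψ.submatrix id g = S * (Φ.submatrix id g * diagonal (l ∘ g)) := by
  have hCΨ : C * Ψ = S * (Φ * diagonal l) := by
    rw [hC, Matrix.mul_assoc _ T, Matrix.mul_assoc _ Ψᵀ, ← Matrix.mul_assoc Ψᵀ, hΨ, Matrix.mul_one,
      Matrix.mul_assoc]
  rw [mul_submatrix_id, hCΨ, ← mul_submatrix_id, mul_diagonal_submatrix]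

end Matrix

theorem appGrad_fixedPoint {m n κ : Type*} [Fintype m] [Fintype n] [Fintype κ] [DecidableEq κ]
    {S : Matrix m m ℝ} {C : Matrix m n ℝ} {A : Matrix m κ ℝ} {B : Matrix n κ ℝ}
    {Λ Q : Matrix κ κ ℝ} (hA : Aᵀ * S * A = 1) (hC : C * B = S * (A * Λ)) (hΛ : Λ.PosDef)
    (hQ : Qᵀ * Q = 1) (η : ℝ) :
    A * Λ * Q - η • (S * (A * Λ * Q) - C * (B * Q)) = A * Λ * Q ∧
    (A * Λ * Q)ᵀ * S * (A * Λ * Q) = Qᵀ * (Λ * Λ) * Q ∧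
    ∀ M : Matrix κ κ ℝ, M.PosDef → M * M = Qᵀ * (Λ * Λ) * Q → A * Λ * Q * M⁻¹ = A * Q := by
  have hΛT : Λᵀ = Λ := hΛ.isHermitian
  have hQQT : Q * Qᵀ = 1 := mul_eq_one_comm.mp hQ
  refine ⟨?_, ?_, fun M hM hMM => ?_⟩
  · rw [← Matrix.mul_assoc C, hC, Matrix.mul_assoc S, sub_self, smul_zero, sub_zero]
  · calc (A * Λ * Q)ᵀ * S * (A * Λ * Q) = Qᵀ * Λ * (Aᵀ * S * A) * Λ * Q := by
          simp only [transpose_mul, hΛT, Matrix.mul_assoc]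
      _ = Qᵀ * (Λ * Λ) * Q := by simp only [hA, Matrix.mul_one, Matrix.mul_assoc]
  · have hconj : (Qᵀ * Λ * Q).PosSemidef := by
      simpa using hΛ.posSemidef.conjTranspose_mul_mul_same Q
    have hsq : Qᵀ * Λ * Q * (Qᵀ * Λ * Q) = Qᵀ * (Λ * Λ) * Q := by
      calc Qᵀ * Λ * Q * (Qᵀ * Λ * Q) = Qᵀ * Λ * (Q * Qᵀ) * Λ * Q := by
            simp only [Matrix.mul_assoc]
        _ = Qᵀ * (Λ * Λ) * Q := by simp only [hQQT, Matrix.mul_one, Matrix.mul_assoc]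
    rw [hM.posSemidef.eq_of_mul_self_eq hconj (hMM.trans hsq.symm),
      mul_mul_inv_transpose_mul_mul A ((isUnit_iff_isUnit_det Λ).mp hΛ.isUnit) hQ]

theorem stmt5_general {p1 p2 p k : ℕ} (hk : k ≤ p)
    (Sx : Matrix (Fin p1) (Fin p1) ℝ) (Sy : Matrix (Fin p2) (Fin p2) ℝ)
    (Sxy : Matrix (Fin p1) (Fin p2) ℝ)
    (hSypd : Sy.PosDef)
    (Φ : Matrix (Fin p1) (Fin p) ℝ) (Ψ : Matrix (Fin p2) (Fin p) ℝ)
    (l : Fin p → ℝ) (hlpos : ∀ i : Fin k, 0 < l (Fin.castLE hk i))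
    (hΦ : Φᵀ * Sx * Φ = 1) (hΨ : Ψᵀ * Sy * Ψ = 1)
    (hdecomp : Sxy = Sx * Φ * Matrix.diagonal l * Ψᵀ * Sy)
    -- top `k` canonical vectors and correlations
    (Φk : Matrix (Fin p1) (Fin k) ℝ) (Ψk : Matrix (Fin p2) (Fin k) ℝ)
    (Λk : Matrix (Fin k) (Fin k) ℝ)
    (hΦk : Φk = Φ.submatrix id (Fin.castLE hk))
    (hΨk : Ψk = Ψ.submatrix id (Fin.castLE hk))
    (hΛk : Λk = Matrix.diagonal (fun i : Fin k => l (Fin.castLE hk i)))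
    -- orthogonal matrix `Q`
    (Q : Matrix (Fin k) (Fin k) ℝ) (hQ : Qᵀ * Q = 1)
    (η1 η2 : ℝ)
    -- gradient steps
    (Φplus : Matrix (Fin p1) (Fin k) ℝ) (Ψplus : Matrix (Fin p2) (Fin k) ℝ)
    (hΦplus : Φplus = Φk * Λk * Q - η1 • (Sx * (Φk * Λk * Q) - Sxy * (Ψk * Q)))
    (hΨplus : Ψplus = Ψk * Λk * Q - η2 • (Sy * (Ψk * Λk * Q) - Sxyᵀ * (Φk * Q))) :
    -- the gradient step is a fixed point
    Φplus = Φk * Λk * Q ∧ Ψplus = Ψk * Λk * Q ∧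
    -- the Gram matrices
    Φplusᵀ * Sx * Φplus = Qᵀ * (Λk * Λk) * Q ∧
    Ψplusᵀ * Sy * Ψplus = Qᵀ * (Λk * Λk) * Q ∧
    -- the normalization step recovers `Φ_k Q` and `Ψ_k Q`, where the inverse
    -- square root is the inverse of the (unique) positive definite square root
    (∀ Mx : Matrix (Fin k) (Fin k) ℝ, Mx.PosDef → Mx * Mx = Φplusᵀ * Sx * Φplus →
      Φplus * Mx⁻¹ = Φk * Q) ∧
    (∀ My : Matrix (Fin k) (Fin k) ℝ, My.PosDef → My * My = Ψplusᵀ * Sy * Ψplus →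
      Ψplus * My⁻¹ = Ψk * Q) := by
  have hΛpos : Λk.PosDef := hΛk ▸ PosDef.diagonal hlpos
  have hΦkgram : Φkᵀ * Sx * Φk = 1 :=
    hΦk ▸ transpose_submatrix_mul_mul_submatrix_eq_one hΦ (Fin.castLE_injective hk)
  have hΨkgram : Ψkᵀ * Sy * Ψk = 1 :=
    hΨk ▸ transpose_submatrix_mul_mul_submatrix_eq_one hΨ (Fin.castLE_injective hk)
  have hcrossX : Sxy * Ψk = Sx * (Φk * Λk) := by
    rw [hΦk, hΨk, hΛk]
    exact mul_submatrix_id_eq_of_eq_mul_diagonal_mul hdecomp hΨ _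
  have hcrossY : Sxyᵀ * Φk = Sy * (Ψk * Λk) := by
    have hSyT : Syᵀ = Sy := hSypd.isHermitian
    have hdecompT : Sxyᵀ = Sy * Ψ * diagonal l * Φᵀ * Sxᵀ := by
      simp only [hdecomp, transpose_mul, transpose_transpose, diagonal_transpose, hSyT,
        Matrix.mul_assoc]
    have hΦT : Φᵀ * Sxᵀ * Φ = 1 := by
      simpa only [transpose_mul, transpose_transpose, transpose_one, Matrix.mul_assoc]
        using congrArg transpose hΦ
    rw [hΦk, hΨk, hΛk]
    exact mul_submatrix_id_eq_of_eq_mul_diagonal_mul hdecompT hΦT _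
  obtain ⟨hfixX, hgramX, hnormX⟩ := appGrad_fixedPoint hΦkgram hcrossX hΛpos hQ η1
  obtain ⟨hfixY, hgramY, hnormY⟩ := appGrad_fixedPoint hΨkgram hcrossY hΛpos hQ η2
  subst hΦplus hΨplus
  rw [hfixX, hfixY, hgramX, hgramY]
  exact ⟨rfl, rfl, rfl, rfl, hnormX, hnormY⟩

/-- `(Φ_k Q, Ψ_k Q, Φ_k Λ_k Q, Ψ_k Λ_k Q)` is a fixed point of the
rank-`k` AppGrad iteration, for any `k×k` orthogonal matrix `Q`. -/
theorem stmt5 {p1 p2 p k : ℕ} (hk : k ≤ p)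
    (Sx : Matrix (Fin p1) (Fin p1) ℝ) (Sy : Matrix (Fin p2) (Fin p2) ℝ)
    (Sxy : Matrix (Fin p1) (Fin p2) ℝ)
    (hSxpd : Sx.PosDef) (hSypd : Sy.PosDef)
    (Φ : Matrix (Fin p1) (Fin p) ℝ) (Ψ : Matrix (Fin p2) (Fin p) ℝ)
    (l : Fin p → ℝ) (hlpos : ∀ i : Fin k, 0 < l (Fin.castLE hk i))
    (hΦ : Φᵀ * Sx * Φ = 1) (hΨ : Ψᵀ * Sy * Ψ = 1)
    (hdecomp : Sxy = Sx * Φ * Matrix.diagonal l * Ψᵀ * Sy)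
    -- top `k` canonical vectors and correlations
    (Φk : Matrix (Fin p1) (Fin k) ℝ) (Ψk : Matrix (Fin p2) (Fin k) ℝ)
    (Λk : Matrix (Fin k) (Fin k) ℝ)
    (hΦk : Φk = Φ.submatrix id (Fin.castLE hk))
    (hΨk : Ψk = Ψ.submatrix id (Fin.castLE hk))
    (hΛk : Λk = Matrix.diagonal (fun i : Fin k => l (Fin.castLE hk i)))
    -- orthogonal matrix `Q`
    (Q : Matrix (Fin k) (Fin k) ℝ) (hQ : Qᵀ * Q = 1) (hQ' : Q * Qᵀ = 1)
    (η1 η2 : ℝ)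
    -- gradient steps
    (Φplus : Matrix (Fin p1) (Fin k) ℝ) (Ψplus : Matrix (Fin p2) (Fin k) ℝ)
    (hΦplus : Φplus = Φk * Λk * Q - η1 • (Sx * (Φk * Λk * Q) - Sxy * (Ψk * Q)))
    (hΨplus : Ψplus = Ψk * Λk * Q - η2 • (Sy * (Ψk * Λk * Q) - Sxyᵀ * (Φk * Q))) :
    -- the gradient step is a fixed point
    Φplus = Φk * Λk * Q ∧ Ψplus = Ψk * Λk * Q ∧
    -- the Gram matrices
    Φplusᵀ * Sx * Φplus = Qᵀ * (Λk * Λk) * Q ∧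
    Ψplusᵀ * Sy * Ψplus = Qᵀ * (Λk * Λk) * Q ∧
    -- the normalization step recovers `Φ_k Q` and `Ψ_k Q`, where the inverse
    -- square root is the inverse of the (unique) positive definite square root
    (∀ Mx : Matrix (Fin k) (Fin k) ℝ, Mx.PosDef → Mx * Mx = Φplusᵀ * Sx * Φplus →
      Φplus * Mx⁻¹ = Φk * Q) ∧
    (∀ My : Matrix (Fin k) (Fin k) ℝ, My.PosDef → My * My = Ψplusᵀ * Sy * Ψplus →
      Ψplus * My⁻¹ = Ψk * Q) :=
  stmt5_general hk Sx Sy Sxy hSypd Φ Ψ l hlpos hΦ hΨ hdecomp Φk Ψk Λk hΦk hΨk hΛk Q hQ η1 η2 Φplus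
    Ψplus hΦplus hΨplus
end

section
/- Let Δφ̃, Δψ be vectors and suppose S_{xy} = SₓΦΛΨᵀS_y with Λ having largest entry λ₁ and second-largest entry λ₂, ΨᵀS_yΨ = I, ΦᵀSₓΦ = I, and S_y^{1/2}ψᵗ a unit vector whose expansion in the orthonormal system {S_y^{1/2}ψᵢ} has first coefficient α₁ ≥ 0, with Δψ = ψᵗ − ψ₁. Then Δφ̃ᵀ S_{xy} Δψ ≤ (λ₁²(1−α₁)² + λ₂²(1−α₁²))^{1/2} · ‖Δφ̃‖_x. -/
/-!
Expanding both vectors in the canonical bases turns `Δφ̃ᵀ S_{xy} Δψ` into `∑ᵢ λᵢ bᵢ aᵢ`, where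
`a = Φᵀ Sₓ Δφ̃` and `b = Ψᵀ S_y Δψ` are the coefficient vectors. Bessel's inequality in the
`Sₓ`-inner product gives `‖a‖ ≤ ‖Δφ̃‖_x`. Writing `c = Ψᵀ S_y ψᵗ`, we have `b = c - e₁` with
`c₁ = α₁` and `‖c‖ ≤ 1` (Bessel again), so `∑ᵢ (λᵢ bᵢ)² ≤ λ₁²(1-α₁)² + λ₂²(1-α₁²)`;
Cauchy–Schwarz concludes.
-/

open Matrix Finset

theorem sum_sq_mul_sub_single_le {ι : Type*} [Fintype ι] [DecidableEq ι] {l c : ι → ℝ}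
    {i₀ : ι} {μ : ℝ} (hμ : ∀ i, i ≠ i₀ → |l i| ≤ μ) (hc : ∑ i, c i ^ 2 ≤ 1) :
    ∑ i, (l i * (c - Pi.single i₀ 1 : ι → ℝ) i) ^ 2 ≤
      l i₀ ^ 2 * (1 - c i₀) ^ 2 + μ ^ 2 * (1 - c i₀ ^ 2) := by
  have hoff : ∑ i ∈ univ.erase i₀, (l i * (c - Pi.single i₀ 1 : ι → ℝ) i) ^ 2 ≤
      ∑ i ∈ univ.erase i₀, μ ^ 2 * c i ^ 2 := by
    refine sum_le_sum fun i hi => ?_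
    have hne := ne_of_mem_erase hi
    have hl : l i ^ 2 ≤ μ ^ 2 := by
      simpa only [sq_abs] using pow_le_pow_left₀ (abs_nonneg _) (hμ i hne) 2
    rw [Pi.sub_apply, Pi.single_eq_of_ne hne, sub_zero, mul_pow]
    exact mul_le_mul_of_nonneg_right hl (sq_nonneg _)
  rw [← mul_sum] at hoff
  have hrest : ∑ i ∈ univ.erase i₀, c i ^ 2 ≤ 1 - c i₀ ^ 2 := by
    linarith [add_sum_erase univ (fun i => c i ^ 2) (mem_univ i₀)]
  have hdiag : (l i₀ * (c - Pi.single i₀ 1 : ι → ℝ) i₀) ^ 2 = l i₀ ^ 2 * (1 - c i₀) ^ 2 := by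
    rw [Pi.sub_apply, Pi.single_eq_same]; ring
  rw [← add_sum_erase univ _ (mem_univ i₀), hdiag]
  nlinarith [mul_le_mul_of_nonneg_left hrest (sq_nonneg μ)]

namespace Matrix

variable {R : Type*} [CommSemiring R] {m n k : Type*} [Fintype m] [Fintype n] [Fintype k]

theorem dotProduct_mulVec_comm {S : Matrix n n R} (hS : Sᵀ = S) (x y : n → R) :
    x ⬝ᵥ (S *ᵥ y) = y ⬝ᵥ (S *ᵥ x) := by
  rw [dotProduct_mulVec, ← mulVec_transpose, hS, dotProduct_comm]

theorem dotProduct_mul_diagonal_mul_mulVec [DecidableEq k] (A : Matrix m k R) (l : k → R)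
    (B : Matrix k n R) (x : m → R) (y : n → R) :
    x ⬝ᵥ ((A * diagonal l * B) *ᵥ y) = ∑ i, l i * (B *ᵥ y) i * (Aᵀ *ᵥ x) i := by
  rw [← mulVec_mulVec, ← mulVec_mulVec, dotProduct_mulVec, ← mulVec_transpose,
    dotProduct_comm]
  simp only [dotProduct, mulVec_diagonal]

theorem transpose_mulVec_mulVec_mulVec_of_orthonormal [DecidableEq k] {S : Matrix n n R}
    {Ψ : Matrix n k R} (hΨ : Ψᵀ * S * Ψ = 1) (v : k → R) : Ψᵀ *ᵥ (S *ᵥ (Ψ *ᵥ v)) = v := by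
  rw [mulVec_mulVec, mulVec_mulVec, hΨ, one_mulVec]

/-- Bessel's inequality for `Φ` orthonormal in `⟪u, v⟫ = uᵀ S v`: with `a = Φᵀ S x`, the residual
`x - Φ a` has squared `S`-norm `xᵀ S x - ‖a‖²`. -/
theorem PosSemidef.sum_sq_transpose_mulVec_le [DecidableEq m] {S : Matrix n n ℝ}
    (hS : S.PosSemidef) {Φ : Matrix n m ℝ} (hΦ : Φᵀ * S * Φ = 1)
    (x : n → ℝ) : ∑ i, (Φᵀ *ᵥ (S *ᵥ x)) i ^ 2 ≤ x ⬝ᵥ (S *ᵥ x) := by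
  set a := Φᵀ *ᵥ (S *ᵥ x)
  have hSt : Sᵀ = S := hS.isHermitian
  have hcross : (Φ *ᵥ a) ⬝ᵥ (S *ᵥ x) = a ⬝ᵥ a := by
    rw [dotProduct_comm, ← dotProduct_transpose_mulVec]
  have hproj : (Φ *ᵥ a) ⬝ᵥ (S *ᵥ (Φ *ᵥ a)) = a ⬝ᵥ a := by
    rw [dotProduct_comm, ← dotProduct_transpose_mulVec,
      transpose_mulVec_mulVec_mulVec_of_orthonormal hΦ]
  have hres : 0 ≤ (x - Φ *ᵥ a) ⬝ᵥ (S *ᵥ (x - Φ *ᵥ a)) := by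
    simpa using hS.dotProduct_mulVec_nonneg (x - Φ *ᵥ a)
  rw [mulVec_sub, dotProduct_sub, sub_dotProduct, sub_dotProduct,
    dotProduct_mulVec_comm hSt x (Φ *ᵥ a), hcross, hproj] at hres
  have hsq : a ⬝ᵥ a = ∑ i, a i ^ 2 := by simp only [dotProduct, sq]
  linarith

end Matrix

theorem stmt10_general {p1 p2 p : ℕ} [NeZero p]
    (Sx : Matrix (Fin p1) (Fin p1) ℝ) (Sy : Matrix (Fin p2) (Fin p2) ℝ)
    (Sxy : Matrix (Fin p1) (Fin p2) ℝ)
    (hSxpd : Sx.PosDef) (hSypd : Sy.PosDef)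
    (Φ : Matrix (Fin p1) (Fin p) ℝ) (Ψ : Matrix (Fin p2) (Fin p) ℝ)
    (l : Fin p → ℝ) (lam1 lam2 : ℝ)
    (hlnn : ∀ i, 0 ≤ l i)
    (hlam1 : lam1 = l 0)
    (hl2 : ∀ i : Fin p, i ≠ 0 → l i ≤ lam2)
    (hΦ : Φᵀ * Sx * Φ = 1) (hΨ : Ψᵀ * Sy * Ψ = 1)
    (hdecomp : Sxy = Sx * Φ * Matrix.diagonal l * Ψᵀ * Sy)
    -- `ψ₁` : the first canonical vector, `ψᵗ` an `Sy`-unit vector with first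
    -- expansion coefficient `α₁ = ψᵗᵀ Sy ψ₁ ≥ 0`
    (ψ1 : Fin p2 → ℝ) (hψ1 : ψ1 = fun j => Ψ j 0)
    (ψt : Fin p2 → ℝ) (hψt : ψt ⬝ᵥ (Sy *ᵥ ψt) = 1)
    (α1 : ℝ) (hα1 : α1 = ψt ⬝ᵥ (Sy *ᵥ ψ1))
    (Δφ' : Fin p1 → ℝ) (Δψ : Fin p2 → ℝ) (hΔψ : Δψ = ψt - ψ1) :
    Δφ' ⬝ᵥ (Sxy *ᵥ Δψ) ≤
      Real.sqrt (lam1 ^ 2 * (1 - α1) ^ 2 + lam2 ^ 2 * (1 - α1 ^ 2)) *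
        Real.sqrt (Δφ' ⬝ᵥ (Sx *ᵥ Δφ')) := by
  have hSx : Sxᵀ = Sx := hSxpd.isHermitian
  have hSy : Syᵀ = Sy := hSypd.isHermitian
  set a := Φᵀ *ᵥ (Sx *ᵥ Δφ')
  set c := Ψᵀ *ᵥ (Sy *ᵥ ψt)
  have hψ1_eq : ψ1 = Ψ *ᵥ Pi.single 0 1 := by
    rw [hψ1, mulVec_single_one]; rfl
  have hb : Ψᵀ *ᵥ (Sy *ᵥ Δψ) = c - Pi.single 0 1 := by
    rw [hΔψ, mulVec_sub, mulVec_sub, hψ1_eq, transpose_mulVec_mulVec_mulVec_of_orthonormal hΨ]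
  have hc0 : c 0 = α1 := by
    rw [hα1, dotProduct_mulVec_comm hSy, hψ1_eq, dotProduct_comm, ← dotProduct_transpose_mulVec,
      single_one_dotProduct]
  have hl : ∀ i, i ≠ 0 → |l i| ≤ lam2 := fun i hi =>
    (abs_of_nonneg (hlnn i)).trans_le (hl2 i hi)
  calc Δφ' ⬝ᵥ (Sxy *ᵥ Δψ) = ∑ i, l i * (c - Pi.single 0 1 : Fin p → ℝ) i * a i := by
        rw [hdecomp, Matrix.mul_assoc _ Ψᵀ, dotProduct_mul_diagonal_mul_mulVec, ← mulVec_mulVec,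
          hb, transpose_mul, hSx, ← mulVec_mulVec]
    _ ≤ √(∑ i, (l i * (c - Pi.single 0 1 : Fin p → ℝ) i) ^ 2) * √(∑ i, a i ^ 2) :=
        Real.sum_mul_le_sqrt_mul_sqrt _ _ _
    _ ≤ _ := by
        gcongr
        · rw [← hc0, hlam1]
          exact sum_sq_mul_sub_single_le hl
            (hψt ▸ PosSemidef.sum_sq_transpose_mulVec_le hSypd.posSemidef hΨ ψt)
        · exact PosSemidef.sum_sq_transpose_mulVec_le hSxpd.posSemidef hΦ Δφ'

/-- Cauchy–Schwarz bound in the proof of Theorem 2.1: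
`Δφ̃ᵀ S_{xy} Δψ ≤ (λ₁²(1−α₁)² + λ₂²(1−α₁²))^{1/2} · ‖Δφ̃‖_x`. -/
theorem stmt10 {p1 p2 p : ℕ} [NeZero p]
    (Sx : Matrix (Fin p1) (Fin p1) ℝ) (Sy : Matrix (Fin p2) (Fin p2) ℝ)
    (Sxy : Matrix (Fin p1) (Fin p2) ℝ)
    (hSxpd : Sx.PosDef) (hSypd : Sy.PosDef)
    (Φ : Matrix (Fin p1) (Fin p) ℝ) (Ψ : Matrix (Fin p2) (Fin p) ℝ)
    (l : Fin p → ℝ) (lam1 lam2 : ℝ)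
    (hlnn : ∀ i, 0 ≤ l i)
    (hlam1 : lam1 = l 0) (hlam2 : 0 ≤ lam2) (hlam21 : lam2 ≤ lam1)
    (hl2 : ∀ i : Fin p, i ≠ 0 → l i ≤ lam2)
    (hΦ : Φᵀ * Sx * Φ = 1) (hΨ : Ψᵀ * Sy * Ψ = 1)
    (hdecomp : Sxy = Sx * Φ * Matrix.diagonal l * Ψᵀ * Sy)
    -- `ψ₁` : the first canonical vector, `ψᵗ` an `Sy`-unit vector with first
    -- expansion coefficient `α₁ = ψᵗᵀ Sy ψ₁ ≥ 0`
    (ψ1 : Fin p2 → ℝ) (hψ1 : ψ1 = fun j => Ψ j 0)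
    (ψt : Fin p2 → ℝ) (hψt : ψt ⬝ᵥ (Sy *ᵥ ψt) = 1)
    (α1 : ℝ) (hα1 : α1 = ψt ⬝ᵥ (Sy *ᵥ ψ1)) (hα1nn : 0 ≤ α1)
    (Δφ' : Fin p1 → ℝ) (Δψ : Fin p2 → ℝ) (hΔψ : Δψ = ψt - ψ1) :
    Δφ' ⬝ᵥ (Sxy *ᵥ Δψ) ≤
      Real.sqrt (lam1 ^ 2 * (1 - α1) ^ 2 + lam2 ^ 2 * (1 - α1 ^ 2)) *
        Real.sqrt (Δφ' ⬝ᵥ (Sx *ᵥ Δφ')) :=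
  stmt10_general Sx Sy Sxy hSxpd hSypd Φ Ψ l lam1 lam2 hlnn hlam1 hl2 hΦ hΨ hdecomp ψ1 hψ1 ψt hψt α1
    hα1 Δφ' Δψ hΔψ
end

section
/- Contraction inequality for AppGrad (intermediate step of Theorem 2.1): under the CCA setup with λ_max(Sₓ), λ_max(S_y) ≤ L₁, the AppGrad errors satisfy ‖Δφ̃ᵗ⁺¹‖² + ‖Δψ̃ᵗ⁺¹‖² ≤ (‖Δφ̃ᵗ‖² + ‖Δψ̃ᵗ‖²) − 2η·[1 − (1/λ₁)·((L₁/2)‖Δψ̃ᵗ‖² + (L₁/2)‖Δφ̃ᵗ‖² + λ₂²)^{1/2} − 3L₁η]·(‖Δφ̃ᵗ‖_x² + ‖Δψ̃ᵗ‖_y²). -/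
/-!
Write `a = φ̃ᵗ - φ̃₁` and `b = ψ̃ᵗ - ψ̃₁`. Since `S_{xy} ψ₁ = λ₁ Sₓ φ₁`, the `x`-gradient equals
`Sₓ (a - Φ z)` with `z = diag(λ) Ψᵀ S_y (ψᵗ - ψ₁)`, so one step changes `‖a‖²` by
`-2η ‖a‖ₓ² + 2η ⟨Φᵀ Sₓ a, z⟩ + η² ‖Sₓ (a - Φ z)‖²`. Bessel's inequality for the `Sₓ`-orthonormal
columns of `Φ` and `λ_max(Sₓ) ≤ L₁` bound the last two terms by `2η ‖a‖ₓ ‖z‖` and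
`2 L₁ η² (‖a‖ₓ² + ‖z‖²)`. In canonical coordinates, `Ψᵀ S_y (ψᵗ - ψ₁)` has first entry `c - 1`,
where `c ∈ [0, 1]` is the cosine of `ψᵗ` with `ψ₁`, and the remaining entries have squared norm at
most `1 - c²`; hence `‖z‖² ≤ λ₁² (1 - c)² + λ₂² (1 - c²)`. As `‖b‖_y² ≥ λ₁² (1 - c²)`, this gives
`λ₁² ‖z‖² ≤ ‖b‖_y² (λ₂² + ‖b‖_y²)` and `‖z‖² ≤ 2 ‖b‖_y²`. Adding the symmetric `y`-step, AM-GM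
and the concavity of `√` combine the two cross terms into the stated factor.
-/

open Matrix

section DotProduct

variable {n m : Type*} [Fintype n] [Fintype m]

lemma dotProduct_le_sqrt_mul_sqrt (x y : n → ℝ) : x ⬝ᵥ y ≤ √(x ⬝ᵥ x) * √(y ⬝ᵥ y) := by
  simpa only [dotProduct, sq] using Real.sum_mul_le_sqrt_mul_sqrt Finset.univ x y

lemma dotProduct_self_nonneg (x : n → ℝ) : 0 ≤ x ⬝ᵥ x := by
  simpa using dotProduct_star_self_nonneg x

lemma dotProduct_sub_self_le (x y : n → ℝ) :
    (x - y) ⬝ᵥ (x - y) ≤ 2 * (x ⬝ᵥ x) + 2 * (y ⬝ᵥ y) := by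
  have h := dotProduct_self_nonneg (x + y)
  simp only [dotProduct_sub, sub_dotProduct, dotProduct_add, add_dotProduct,
    dotProduct_comm y x] at *
  linarith

lemma dotProduct_self_sub_smul (x y : n → ℝ) (η : ℝ) :
    (x - η • y) ⬝ᵥ (x - η • y) = x ⬝ᵥ x - 2 * η * (x ⬝ᵥ y) + η ^ 2 * (y ⬝ᵥ y) := by
  simp only [dotProduct_sub, sub_dotProduct, dotProduct_smul, smul_dotProduct, smul_eq_mul,
    dotProduct_comm y x]
  ring

lemma Matrix.IsSymm.dotProduct_mulVec_comm {S : Matrix n n ℝ} (hS : S.IsSymm) (x y : n → ℝ) :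
    x ⬝ᵥ (S *ᵥ y) = y ⬝ᵥ (S *ᵥ x) := by
  rw [dotProduct_mulVec, ← mulVec_transpose, hS.eq, dotProduct_comm]

lemma dotProduct_mulVec_smul_sub_smul {S : Matrix n n ℝ} (hS : S.IsSymm) (x y : n → ℝ)
    (r s : ℝ) :
    (r • x - s • y) ⬝ᵥ (S *ᵥ (r • x - s • y)) =
      r ^ 2 * (x ⬝ᵥ (S *ᵥ x)) - 2 * r * s * (x ⬝ᵥ (S *ᵥ y)) + s ^ 2 * (y ⬝ᵥ (S *ᵥ y)) := by
  simp only [mulVec_sub, mulVec_smul, dotProduct_sub, sub_dotProduct, dotProduct_smul,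
    smul_dotProduct, smul_eq_mul, hS.dotProduct_mulVec_comm y x]
  ring

lemma dotProduct_mulVec_smul_sub_smul_of_unit {S : Matrix n n ℝ} (hS : S.IsSymm) {x y : n → ℝ}
    (hx : x ⬝ᵥ (S *ᵥ x) = 1) (hy : y ⬝ᵥ (S *ᵥ y) = 1) (r s : ℝ) :
    (r • x - s • y) ⬝ᵥ (S *ᵥ (r • x - s • y)) =
      r ^ 2 - 2 * r * s * (x ⬝ᵥ (S *ᵥ y)) + s ^ 2 := by
  rw [dotProduct_mulVec_smul_sub_smul hS, hx, hy, mul_one, mul_one]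

lemma eq_sqrt_smul_of_eq_inv_sqrt_smul {S : Matrix n n ℝ} {x y : n → ℝ}
    (hy : y = (√(x ⬝ᵥ (S *ᵥ x)))⁻¹ • x) (hunit : y ⬝ᵥ (S *ᵥ y) = 1) : x = √(x ⬝ᵥ (S *ᵥ x)) • y := by
  have hr : √(x ⬝ᵥ (S *ᵥ x)) ≠ 0 := by
    intro hr
    rw [hy, hr, _root_.inv_zero, zero_smul] at hunit
    simp at hunit
  rw [hy, smul_smul, mul_inv_cancel₀ hr, one_smul]

lemma dotProduct_mulVec_mulVec (S : Matrix n n ℝ) (Φ : Matrix n m ℝ) (x : n → ℝ)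
    (z : m → ℝ) : x ⬝ᵥ (S *ᵥ (Φ *ᵥ z)) = (Φᵀ *ᵥ (Sᵀ *ᵥ x)) ⬝ᵥ z := by
  rw [mulVec_transpose, mulVec_transpose, dotProduct_comm, ← dotProduct_mulVec,
    ← dotProduct_mulVec, dotProduct_comm]

end DotProduct

section Isometry

variable {n m : Type*} [Fintype n] [Fintype m] [DecidableEq m]
  {S : Matrix n n ℝ} {Φ : Matrix n m ℝ}

lemma dotProduct_mulVec_mulVec_of_transpose_mul_mul_eq_one (hΦ : Φᵀ * S * Φ = 1) (z : m → ℝ) :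
    (Φ *ᵥ z) ⬝ᵥ (S *ᵥ (Φ *ᵥ z)) = z ⬝ᵥ z := by
  rw [dotProduct_comm, dotProduct_mulVec, ← mulVec_transpose, mulVec_mulVec, mulVec_mulVec, hΦ,
    one_mulVec, dotProduct_comm]

/-- Bessel's inequality for the `S`-orthonormal columns of `Φ`. -/
lemma transpose_mulVec_mulVec_dotProduct_self_le (hS : S.PosSemidef) (hΦ : Φᵀ * S * Φ = 1)
    (a : n → ℝ) :
    (Φᵀ *ᵥ (S *ᵥ a)) ⬝ᵥ (Φᵀ *ᵥ (S *ᵥ a)) ≤ a ⬝ᵥ (S *ᵥ a) := by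
  have hSymm : S.IsSymm := isHermitian_iff_isSymm.mp hS.isHermitian
  set c := Φᵀ *ᵥ (S *ᵥ a)
  have hcross : a ⬝ᵥ (S *ᵥ (Φ *ᵥ c)) = c ⬝ᵥ c := by
    rw [dotProduct_mulVec_mulVec, hSymm.eq]
  have hcross' : (Φ *ᵥ c) ⬝ᵥ (S *ᵥ a) = c ⬝ᵥ c := by
    rw [hSymm.dotProduct_mulVec_comm, hcross]
  have hproj := hS.dotProduct_mulVec_nonneg (a - Φ *ᵥ c)
  rw [star_trivial, mulVec_sub, dotProduct_sub, sub_dotProduct, sub_dotProduct,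
    dotProduct_mulVec_mulVec_of_transpose_mul_mul_eq_one hΦ, hcross, hcross'] at hproj
  linarith

end Isometry

section Spectral

variable {n : Type*} [Fintype n] [DecidableEq n] {A : Matrix n n ℝ}

lemma Matrix.IsHermitian.exists_eigen_coordinates (hA : A.IsHermitian) (v : n → ℝ) :
    ∃ w : n → ℝ, v ⬝ᵥ v = ∑ i, w i ^ 2 ∧ v ⬝ᵥ (A *ᵥ v) = ∑ i, hA.eigenvalues i * w i ^ 2 ∧
      (A *ᵥ v) ⬝ᵥ (A *ᵥ v) = ∑ i, hA.eigenvalues i ^ 2 * w i ^ 2 := by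
  set U : Matrix n n ℝ := (hA.eigenvectorUnitary : Matrix n n ℝ)
  set d := hA.eigenvalues
  have hUU : U * Uᵀ = 1 := Matrix.mem_unitaryGroup_iff.mp hA.eigenvectorUnitary.2
  have hUU' : Uᵀ * U = 1 := Matrix.mem_unitaryGroup_iff'.mp hA.eigenvectorUnitary.2
  have hspec : A = U * diagonal d * star U := by simpa using hA.spectral_theorem
  rw [show star U = Uᵀ from rfl] at hspec
  have hiso : ∀ x y : n → ℝ, (U *ᵥ x) ⬝ᵥ (U *ᵥ y) = x ⬝ᵥ y := fun x y => by
    rw [dotProduct_mulVec, ← mulVec_transpose, mulVec_mulVec, hUU', one_mulVec]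
  set w := Uᵀ *ᵥ v
  have hv : v = U *ᵥ w := by rw [mulVec_mulVec, hUU, one_mulVec]
  have hAv : A *ᵥ v = U *ᵥ (diagonal d *ᵥ w) := by
    rw [hspec, ← mulVec_mulVec, ← mulVec_mulVec]
  refine ⟨w, ?_, ?_, ?_⟩
  · rw [hv, hiso]
    simp only [dotProduct, sq]
  · rw [hAv, hv, hiso]
    simp only [dotProduct, mulVec_diagonal]
    exact Finset.sum_congr rfl fun i _ => by ring
  · rw [hAv, hiso]
    simp only [dotProduct, mulVec_diagonal]
    exact Finset.sum_congr rfl fun i _ => by ring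

lemma Matrix.IsHermitian.dotProduct_mulVec_le_of_eigenvalues_le (hA : A.IsHermitian) {L : ℝ}
    (hL : ∀ i, hA.eigenvalues i ≤ L) (v : n → ℝ) : v ⬝ᵥ (A *ᵥ v) ≤ L * (v ⬝ᵥ v) := by
  obtain ⟨w, hvv, hvAv, -⟩ := hA.exists_eigen_coordinates v
  rw [hvv, hvAv, Finset.mul_sum]
  exact Finset.sum_le_sum fun i _ => mul_le_mul_of_nonneg_right (hL i) (sq_nonneg _)

lemma Matrix.PosSemidef.mulVec_dotProduct_mulVec_le_of_eigenvalues_le (hA : A.PosSemidef) {L : ℝ}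
    (hL : ∀ i, hA.isHermitian.eigenvalues i ≤ L) (v : n → ℝ) :
    (A *ᵥ v) ⬝ᵥ (A *ᵥ v) ≤ L * (v ⬝ᵥ (A *ᵥ v)) := by
  obtain ⟨w, -, hvAv, hAvAv⟩ := hA.isHermitian.exists_eigen_coordinates v
  rw [hAvAv, hvAv, Finset.mul_sum]
  refine Finset.sum_le_sum fun i _ => ?_
  have hd := hA.eigenvalues_nonneg i
  rw [sq, ← mul_assoc, mul_comm L]
  exact mul_le_mul_of_nonneg_right (mul_le_mul_of_nonneg_left (hL i) hd) (sq_nonneg _)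

end Spectral

section Scalar

lemma sqrt_add_sqrt_le_two_mul_sqrt_add_half {c u v : ℝ} (hu : 0 ≤ c + u) (hv : 0 ≤ c + v) :
    √(c + u) + √(c + v) ≤ 2 * √(c + (u + v) / 2) := by
  refine (abs_le_of_sq_le_sq' ?_ (by positivity)).2
  rw [mul_pow, Real.sq_sqrt (by linarith)]
  nlinarith [sq_nonneg (√(c + u) - √(c + v)), Real.sq_sqrt hu, Real.sq_sqrt hv]

lemma mul_sqrt_le_sqrt_mul_sqrt {lam N B C : ℝ} (hlam : 0 ≤ lam) (hB : 0 ≤ B)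
    (h : lam ^ 2 * N ≤ B * C) : lam * √N ≤ √B * √C := by
  rw [← Real.sqrt_mul hB, ← Real.sqrt_sq hlam, ← Real.sqrt_mul (sq_nonneg lam)]
  exact Real.sqrt_le_sqrt h

lemma sqrt_mul_sqrt_add_sqrt_mul_sqrt_le {A B Nx Ny lam mu : ℝ} (hA : 0 ≤ A) (hB : 0 ≤ B)
    (hlam : 0 < lam) (hNx : lam ^ 2 * Nx ≤ B * (mu ^ 2 + B))
    (hNy : lam ^ 2 * Ny ≤ A * (mu ^ 2 + A)) :
    √A * √Nx + √B * √Ny ≤ (A + B) / lam * √(mu ^ 2 + (A + B) / 2) := by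
  have hx := mul_sqrt_le_sqrt_mul_sqrt hlam.le hB hNx
  have hy := mul_sqrt_le_sqrt_mul_sqrt hlam.le hA hNy
  have hAB : √A * √B ≤ (A + B) / 2 := by
    nlinarith [sq_nonneg (√A - √B), Real.sq_sqrt hA, Real.sq_sqrt hB]
  have hconc := sqrt_add_sqrt_le_two_mul_sqrt_add_half (c := mu ^ 2) (u := B) (v := A)
    (by positivity) (by positivity)
  rw [add_comm B A] at hconc
  rw [div_mul_eq_mul_div, le_div_iff₀ hlam]
  calc (√A * √Nx + √B * √Ny) * lam = √A * (lam * √Nx) + √B * (lam * √Ny) := by ring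
    _ ≤ √A * (√B * √(mu ^ 2 + B)) + √B * (√A * √(mu ^ 2 + A)) := by gcongr
    _ = √A * √B * (√(mu ^ 2 + B) + √(mu ^ 2 + A)) := by ring
    _ ≤ (A + B) / 2 * (2 * √(mu ^ 2 + (A + B) / 2)) := by gcongr
    _ = (A + B) * √(mu ^ 2 + (A + B) / 2) := by ring

lemma coupling_bounds_of_cos {N B c lam mu : ℝ}
    (hN : N ≤ lam ^ 2 * (1 - c) ^ 2 + mu ^ 2 * (1 - c ^ 2)) (hB : lam ^ 2 * (1 - c ^ 2) ≤ B)
    (hc0 : 0 ≤ c) (hc1 : c ≤ 1) (hmu0 : 0 ≤ mu) (hmu : mu ≤ lam) :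
    lam ^ 2 * N ≤ B * (mu ^ 2 + B) ∧ N ≤ 2 * B := by
  have hlin : lam ^ 2 * (1 - c) ≤ B := by
    nlinarith [mul_nonneg (sq_nonneg lam) (mul_nonneg hc0 (sub_nonneg.2 hc1))]
  have hlin0 : 0 ≤ lam ^ 2 * (1 - c) := mul_nonneg (sq_nonneg lam) (by linarith)
  have hmu2 : mu ^ 2 ≤ lam ^ 2 := pow_le_pow_left₀ hmu0 hmu 2
  constructor
  · nlinarith [mul_self_le_mul_self hlin0 hlin, mul_le_mul_of_nonneg_left hB (sq_nonneg mu),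
      mul_le_mul_of_nonneg_left hN (sq_nonneg lam)]
  · nlinarith [mul_le_mul_of_nonneg_right hmu2 (by nlinarith : (0:ℝ) ≤ 1 - c ^ 2)]

lemma appgrad_contraction_of_bounds {A B Ea Eb Nx Ny lam mu L η : ℝ} (hA : 0 ≤ A) (hB : 0 ≤ B)
    (hlam : 0 < lam) (hL : 0 ≤ L) (hη : 0 ≤ η)
    (hNx : lam ^ 2 * Nx ≤ B * (mu ^ 2 + B)) (hNx2 : Nx ≤ 2 * B)
    (hNy : lam ^ 2 * Ny ≤ A * (mu ^ 2 + A)) (hNy2 : Ny ≤ 2 * A)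
    (hAE : A ≤ L * Ea) (hBE : B ≤ L * Eb) :
    (Ea - 2 * η * A + 2 * η * (√A * √Nx) + 2 * L * η ^ 2 * (A + Nx)) +
      (Eb - 2 * η * B + 2 * η * (√B * √Ny) + 2 * L * η ^ 2 * (B + Ny)) ≤
    (Ea + Eb) - 2 * η * (1 - 1 / lam * √(L / 2 * Eb + L / 2 * Ea + mu ^ 2) - 3 * L * η) *
      (A + B) := by
  have hC : √(mu ^ 2 + (A + B) / 2) ≤ √(L / 2 * Eb + L / 2 * Ea + mu ^ 2) :=
    Real.sqrt_le_sqrt (by linarith)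
  have hcross : √A * √Nx + √B * √Ny ≤ (A + B) / lam * √(L / 2 * Eb + L / 2 * Ea + mu ^ 2) :=
    (sqrt_mul_sqrt_add_sqrt_mul_sqrt_le hA hB hlam hNx hNy).trans (by gcongr)
  have h1 := mul_le_mul_of_nonneg_left hcross (by positivity : (0:ℝ) ≤ 2 * η)
  have h2 := mul_le_mul_of_nonneg_left (add_le_add hNx2 hNy2)
    (by positivity : (0:ℝ) ≤ 2 * L * η ^ 2)
  linear_combination h1 + h2

end Scalar

section CanonicalDecomposition

variable {n m ι : Type*} [Fintype n] [Fintype m] [Fintype ι] [DecidableEq ι]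
  {Sx : Matrix n n ℝ} {Sy : Matrix m m ℝ} {Φ : Matrix n ι ℝ} {Ψ : Matrix m ι ℝ}

lemma canonical_transpose (hSx : Sx.IsSymm) (hSy : Sy.IsSymm) (l : ι → ℝ) :
    (Sx * Φ * diagonal l * Ψᵀ * Sy)ᵀ = Sy * Ψ * diagonal l * Φᵀ * Sx := by
  simp only [transpose_mul, transpose_transpose, diagonal_transpose, hSx.eq, hSy.eq,
    Matrix.mul_assoc]

lemma mulVec_sub_canonical_mulVec (hΨ : Ψᵀ * Sy * Ψ = 1) (l : ι → ℝ) (j : ι) (x : n → ℝ)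
    (y : m → ℝ) :
    Sx *ᵥ x - (Sx * Φ * diagonal l * Ψᵀ * Sy) *ᵥ y =
      Sx *ᵥ (x - l j • Φ.col j - Φ *ᵥ (diagonal l *ᵥ (Ψᵀ *ᵥ (Sy *ᵥ (y - Ψ.col j))))) := by
  have hcol : Ψᵀ *ᵥ (Sy *ᵥ Ψ.col j) = Pi.single j 1 := by
    rw [← mulVec_single_one, mulVec_mulVec, mulVec_mulVec, hΨ, one_mulVec]
  have hfix : Φ *ᵥ (diagonal l *ᵥ Pi.single j 1) = l j • Φ.col j := by
    rw [diagonal_mulVec_single, mul_one, mulVec_single, op_smul_eq_smul]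
  simp only [← mulVec_mulVec, mulVec_sub, hcol, hfix, mulVec_smul]
  abel

end CanonicalDecomposition

lemma diagonal_mulVec_dotProduct_self_le {k : ℕ} {l : Fin (k + 2) → ℝ} (hl0 : ∀ i, 0 ≤ l i)
    (hl : Antitone l) (u : Fin (k + 2) → ℝ) :
    (diagonal l *ᵥ u) ⬝ᵥ (diagonal l *ᵥ u) ≤
      l 0 ^ 2 * u 0 ^ 2 + l 1 ^ 2 * (u ⬝ᵥ u - u 0 ^ 2) := by
  simp only [dotProduct, mulVec_diagonal, Fin.sum_univ_succ (n := k + 1)]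
  have htail : ∀ i : Fin (k + 1), l i.succ ^ 2 ≤ l 1 ^ 2 := fun i =>
    pow_le_pow_left₀ (hl0 _) (hl (Fin.succ_le_succ_iff.2 (Fin.zero_le i))) 2
  have hsum : ∑ i : Fin (k + 1), l i.succ * u i.succ * (l i.succ * u i.succ) ≤
      l 1 ^ 2 * ∑ i : Fin (k + 1), u i.succ * u i.succ := by
    rw [Finset.mul_sum]
    refine Finset.sum_le_sum fun i _ => ?_
    nlinarith [mul_le_mul_of_nonneg_right (htail i) (mul_self_nonneg (u i.succ))]
  nlinarith

section AppGradStep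

variable {n m : Type*} [Fintype n] [Fintype m] [DecidableEq n] [DecidableEq m]
  {S : Matrix n n ℝ}

lemma gradient_step_dotProduct_self_le (hS : S.PosSemidef) {L : ℝ}
    (hL : ∀ i, hS.isHermitian.eigenvalues i ≤ L) {Φ : Matrix n m ℝ} (hΦ : Φᵀ * S * Φ = 1)
    {η : ℝ} (hη : 0 ≤ η) (a : n → ℝ) (z : m → ℝ) :
    (a - η • (S *ᵥ (a - Φ *ᵥ z))) ⬝ᵥ (a - η • (S *ᵥ (a - Φ *ᵥ z))) ≤
      a ⬝ᵥ a - 2 * η * (a ⬝ᵥ (S *ᵥ a)) + 2 * η * (√(a ⬝ᵥ (S *ᵥ a)) * √(z ⬝ᵥ z)) +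
        2 * L * η ^ 2 * (a ⬝ᵥ (S *ᵥ a) + z ⬝ᵥ z) := by
  have hSymm : S.IsSymm := isHermitian_iff_isSymm.mp hS.isHermitian
  have hcross : a ⬝ᵥ (S *ᵥ (Φ *ᵥ z)) ≤ √(a ⬝ᵥ (S *ᵥ a)) * √(z ⬝ᵥ z) := by
    rw [dotProduct_mulVec_mulVec, hSymm.eq]
    refine (dotProduct_le_sqrt_mul_sqrt _ _).trans ?_
    gcongr
    exact transpose_mulVec_mulVec_dotProduct_self_le hS hΦ a
  have hgrad : (S *ᵥ (a - Φ *ᵥ z)) ⬝ᵥ (S *ᵥ (a - Φ *ᵥ z)) ≤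
      2 * L * (a ⬝ᵥ (S *ᵥ a) + z ⬝ᵥ z) := by
    have ha := hS.mulVec_dotProduct_mulVec_le_of_eigenvalues_le hL a
    have hz := hS.mulVec_dotProduct_mulVec_le_of_eigenvalues_le hL (Φ *ᵥ z)
    rw [dotProduct_mulVec_mulVec_of_transpose_mul_mul_eq_one hΦ] at hz
    rw [mulVec_sub]
    linarith [dotProduct_sub_self_le (S *ᵥ a) (S *ᵥ (Φ *ᵥ z))]
  have hag : a ⬝ᵥ (S *ᵥ (a - Φ *ᵥ z)) = a ⬝ᵥ (S *ᵥ a) - a ⬝ᵥ (S *ᵥ (Φ *ᵥ z)) := by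
    rw [mulVec_sub, dotProduct_sub]
  rw [dotProduct_self_sub_smul, hag]
  linear_combination (2 * η) * hcross + η ^ 2 * hgrad

end AppGradStep

section Coupling

variable {n : Type*} [Fintype n] {k : ℕ} {S : Matrix n n ℝ} {Ψ : Matrix n (Fin (k + 2)) ℝ}
  {l : Fin (k + 2) → ℝ}

lemma coupling_bounds (hS : S.PosSemidef) (hΨ : Ψᵀ * S * Ψ = 1) (hl0 : ∀ i, 0 ≤ l i)
    (hl : Antitone l) {ψ : n → ℝ} (hψ : ψ ⬝ᵥ (S *ᵥ ψ) = 1) (hcos : 0 ≤ ψ ⬝ᵥ (S *ᵥ Ψ.col 0))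
    {z : Fin (k + 2) → ℝ} (hz : z = diagonal l *ᵥ (Ψᵀ *ᵥ (S *ᵥ (ψ - Ψ.col 0))))
    {e : n → ℝ} {r : ℝ} (he : e = r • ψ - l 0 • Ψ.col 0) :
    l 0 ^ 2 * (z ⬝ᵥ z) ≤ e ⬝ᵥ (S *ᵥ e) * (l 1 ^ 2 + e ⬝ᵥ (S *ᵥ e)) ∧
      z ⬝ᵥ z ≤ 2 * (e ⬝ᵥ (S *ᵥ e)) := by
  have hSymm : S.IsSymm := isHermitian_iff_isSymm.mp hS.isHermitian
  set c := ψ ⬝ᵥ (S *ᵥ Ψ.col 0)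
  have hcol : Ψ.col 0 ⬝ᵥ (S *ᵥ Ψ.col 0) = 1 := by
    rw [← mulVec_single_one, dotProduct_mulVec_mulVec_of_transpose_mul_mul_eq_one hΨ]
    simp
  have hdiff : (ψ - Ψ.col 0) ⬝ᵥ (S *ᵥ (ψ - Ψ.col 0)) = 2 - 2 * c := by
    have h := dotProduct_mulVec_smul_sub_smul_of_unit hSymm hψ hcol 1 1
    rw [one_smul, one_smul] at h
    linarith
  have hc1 : c ≤ 1 := by
    have h := hS.dotProduct_mulVec_nonneg (ψ - Ψ.col 0)
    rw [star_trivial, hdiff] at h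
    linarith
  set u := Ψᵀ *ᵥ (S *ᵥ (ψ - Ψ.col 0))
  have hu0 : u 0 = c - 1 := by
    change Ψ.col 0 ⬝ᵥ (S *ᵥ (ψ - Ψ.col 0)) = c - 1
    rw [mulVec_sub, dotProduct_sub, hSymm.dotProduct_mulVec_comm _ ψ, hcol]
  have huu : u ⬝ᵥ u ≤ 2 - 2 * c := hdiff ▸ transpose_mulVec_mulVec_dotProduct_self_le hS hΨ _
  have hzz : z ⬝ᵥ z ≤ l 0 ^ 2 * (1 - c) ^ 2 + l 1 ^ 2 * (1 - c ^ 2) := by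
    have h := diagonal_mulVec_dotProduct_self_le hl0 hl u
    rw [← hz, hu0] at h
    nlinarith [mul_le_mul_of_nonneg_left huu (sq_nonneg (l 1))]
  have hee : l 0 ^ 2 * (1 - c ^ 2) ≤ e ⬝ᵥ (S *ᵥ e) := by
    rw [he, dotProduct_mulVec_smul_sub_smul_of_unit hSymm hψ hcol]
    nlinarith [sq_nonneg (r - l 0 * c)]
  exact coupling_bounds_of_cos hzz hee hcos hc1 (hl0 1) (hl (Fin.zero_le 1))

end Coupling

/-- contraction inequality, intermediate step of Theorem 2.1. -/
theorem stmt14 {p1 p2 p : ℕ}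
    (Sx : Matrix (Fin p1) (Fin p1) ℝ) (Sy : Matrix (Fin p2) (Fin p2) ℝ)
    (Sxy : Matrix (Fin p1) (Fin p2) ℝ)
    (hSxpd : Sx.PosDef) (hSypd : Sy.PosDef)
    (L1 : ℝ) (hL1 : 1 ≤ L1)
    (hmaxx : ∀ i, hSxpd.isHermitian.eigenvalues i ≤ L1)
    (hmaxy : ∀ i, hSypd.isHermitian.eigenvalues i ≤ L1)
    -- canonical decomposition with correlations `l 0 = λ₁ ≥ λ₂ = l 1 ≥ …`
    (Φ : Matrix (Fin p1) (Fin (p + 2)) ℝ) (Ψ : Matrix (Fin p2) (Fin (p + 2)) ℝ)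
    (l : Fin (p + 2) → ℝ) (hlnn : ∀ i, 0 ≤ l i)
    (hlmono : ∀ i j : Fin (p + 2), i ≤ j → l j ≤ l i)
    (hΦ : Φᵀ * Sx * Φ = 1) (hΨ : Ψᵀ * Sy * Ψ = 1)
    (hdecomp : Sxy = Sx * Φ * Matrix.diagonal l * Ψᵀ * Sy)
    (lam1 lam2 : ℝ) (hlam1 : lam1 = l 0) (hlam2 : lam2 = l 1)
    (hlam1pos : 0 < lam1)
    (φ1 : Fin p1 → ℝ) (ψ1 : Fin p2 → ℝ)
    (hφ1 : φ1 = fun j => Φ j 0) (hψ1 : ψ1 = fun j => Ψ j 0)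
    -- unnormalized counterparts of the leading canonical pair
    (φ1' : Fin p1 → ℝ) (ψ1' : Fin p2 → ℝ)
    (hφ1' : φ1' = lam1 • φ1) (hψ1' : ψ1' = lam1 • ψ1)
    -- current iterates : unnormalized `φt', ψt'` and normalized `φt, ψt`
    (φt' : Fin p1 → ℝ) (ψt' : Fin p2 → ℝ) (φt : Fin p1 → ℝ) (ψt : Fin p2 → ℝ)
    (hφt : φt = (Real.sqrt (φt' ⬝ᵥ (Sx *ᵥ φt')))⁻¹ • φt')
    (hψt : ψt = (Real.sqrt (ψt' ⬝ᵥ (Sy *ᵥ ψt')))⁻¹ • ψt')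
    (hφtunit : φt ⬝ᵥ (Sx *ᵥ φt) = 1) (hψtunit : ψt ⬝ᵥ (Sy *ᵥ ψt) = 1)
    -- WLOG nonnegative cosines with the leading canonical pair
    (hcosx : 0 ≤ φt' ⬝ᵥ (Sx *ᵥ φ1)) (hcosy : 0 ≤ ψt' ⬝ᵥ (Sy *ᵥ ψ1))
    -- one AppGrad step with common step size `η`
    (η : ℝ) (hη : 0 < η)
    (φn' : Fin p1 → ℝ) (ψn' : Fin p2 → ℝ)
    (hupx : φn' = φt' - η • (Sx *ᵥ φt' - Sxy *ᵥ ψt))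
    (hupy : ψn' = ψt' - η • (Sy *ᵥ ψt' - Sxyᵀ *ᵥ φt)) :
    (φn' - φ1') ⬝ᵥ (φn' - φ1') + (ψn' - ψ1') ⬝ᵥ (ψn' - ψ1') ≤
      ((φt' - φ1') ⬝ᵥ (φt' - φ1') + (ψt' - ψ1') ⬝ᵥ (ψt' - ψ1'))
      - 2 * η *
        (1 - (1 / lam1) * Real.sqrt ((L1 / 2) * ((ψt' - ψ1') ⬝ᵥ (ψt' - ψ1'))
              + (L1 / 2) * ((φt' - φ1') ⬝ᵥ (φt' - φ1')) + lam2 ^ 2)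
           - 3 * L1 * η) *
        ((φt' - φ1') ⬝ᵥ (Sx *ᵥ (φt' - φ1'))
          + (ψt' - ψ1') ⬝ᵥ (Sy *ᵥ (ψt' - ψ1'))) := by
  replace hφ1 : φ1 = Φ.col 0 := hφ1
  replace hψ1 : ψ1 = Ψ.col 0 := hψ1
  subst hdecomp hφ1 hψ1 hφ1' hψ1' hlam1 hlam2 hupx hupy
  have hSxSymm : Sx.IsSymm := isHermitian_iff_isSymm.mp hSxpd.isHermitian
  have hSySymm : Sy.IsSymm := isHermitian_iff_isSymm.mp hSypd.isHermitian
  have hφt' := eq_sqrt_smul_of_eq_inv_sqrt_smul hφt hφtunit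
  have hψt' := eq_sqrt_smul_of_eq_inv_sqrt_smul hψt hψtunit
  have hcx : 0 ≤ φt ⬝ᵥ (Sx *ᵥ Φ.col 0) := by
    rw [hφt, smul_dotProduct]; exact mul_nonneg (by positivity) hcosx
  have hcy : 0 ≤ ψt ⬝ᵥ (Sy *ᵥ Ψ.col 0) := by
    rw [hψt, smul_dotProduct]; exact mul_nonneg (by positivity) hcosy
  obtain ⟨hzx, hzx2⟩ := coupling_bounds hSypd.posSemidef hΨ hlnn hlmono hψtunit hcy rfl
    (congrArg (· - _) hψt')
  obtain ⟨hzy, hzy2⟩ := coupling_bounds hSxpd.posSemidef hΦ hlnn hlmono hφtunit hcx rfl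
    (congrArg (· - _) hφt')
  rw [sub_right_comm, mulVec_sub_canonical_mulVec hΨ l 0, canonical_transpose hSxSymm hSySymm,
    sub_right_comm ψt', mulVec_sub_canonical_mulVec hΦ l 0]
  refine (add_le_add (gradient_step_dotProduct_self_le hSxpd.posSemidef hmaxx hΦ hη.le _ _)
    (gradient_step_dotProduct_self_le hSypd.posSemidef hmaxy hΨ hη.le _ _)).trans ?_
  exact appgrad_contraction_of_bounds (hSxpd.posSemidef.dotProduct_mulVec_nonneg _)
    (hSypd.posSemidef.dotProduct_mulVec_nonneg _) hlam1pos (by linarith) hη.le hzx hzx2 hzy hzy2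
    (hSxpd.isHermitian.dotProduct_mulVec_le_of_eigenvalues_le hmaxx _)
    (hSypd.isHermitian.dotProduct_mulVec_le_of_eigenvalues_le hmaxy _)
end
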